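/- arXiv:2306.08800 — 2 statements merged into one kernel-verified Lean document; each statement's English description precedes it below -/
import Mathlib

section
/- Let (X,d) be a Robinson space with |X| ≥ 3 in which all mmodules are trivial (the only mmodules are ∅, X, and the singletons {x} for x ∈ X). Then (X,d) is flat: it has exactly two compatible orders, each the reverse of the other. -/
structure Dissim (X : Type*) where
  d : X → X → ℝ
  symm : ∀ x y, d x y = d y x
  nonneg : ∀ x y, 0 ≤ d x y
  self : ∀ x, d x x = 0

variable {X : Type*}

def Compatible (D : Dissim X) (lt : X → X → Prop) : Prop :=
  ∀ x y z : X, lt x y → lt y z → D.d x y ≤ D.d x z ∧ D.d y z ≤ D.d x z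

def IsCompatOrder (D : Dissim X) (lt : X → X → Prop) : Prop :=
  IsStrictTotalOrder X lt ∧ Compatible D lt

def Robinson (D : Dissim X) : Prop :=
  ∃ lt : X → X → Prop, IsCompatOrder D lt

def IsMmodule (D : Dissim X) (M : Set X) : Prop :=
  ∀ z ∉ M, ∀ x ∈ M, ∀ y ∈ M, D.d z x = D.d z y

def IsInterval (lt : X → X → Prop) (I : Set X) : Prop :=
  ∀ a b c : X, lt a b → lt b c → a ∈ I → c ∈ I → b ∈ I

def IsBlock (D : Dissim X) (Y : Set X) : Prop :=
  ∀ lt : X → X → Prop, IsCompatOrder D lt → IsInterval lt Y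

noncomputable def diam (D : Dissim X) (Y : Set X) : ℝ :=
  sSup (Set.image2 D.d Y Y)

def Gdelta (D : Dissim X) (δ : ℝ) : SimpleGraph X where
  Adj x y := x ≠ y ∧ D.d x y ≠ δ
  symm := by
    constructor
    rintro x y ⟨hxy, hd⟩
    exact ⟨hxy.symm, by rw [D.symm]; exact hd⟩
  loopless := by constructor; rintro x ⟨h, -⟩; exact h rfl

def Gle (D : Dissim X) (δ : ℝ) : SimpleGraph X where
  Adj x y := x ≠ y ∧ D.d x y ≤ δ
  symm := by
    constructor
    rintro x y ⟨hxy, hd⟩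
    exact ⟨hxy.symm, by rw [D.symm]; exact hd⟩
  loopless := by constructor; rintro x ⟨h, -⟩; exact h rfl

def Glt (D : Dissim X) (δ : ℝ) : SimpleGraph X where
  Adj x y := x ≠ y ∧ D.d x y < δ
  symm := by
    constructor
    rintro x y ⟨hxy, hd⟩
    exact ⟨hxy.symm, by rw [D.symm]; exact hd⟩
  loopless := by constructor; rintro x ⟨h, -⟩; exact h rfl

def IsCompOf {V : Type*} (G : SimpleGraph V) (C : Set V) : Prop :=
  ∃ x : V, C = {y | G.Reachable x y}

def MMax (D : Dissim X) : Set (Set X) :=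
  {M | IsMmodule D M ∧ M ≠ Set.univ ∧
    ∀ M' : Set X, IsMmodule D M' → M' ≠ Set.univ → M ⊆ M' → M = M'}

def IsPartition {α : Type*} (P : Set (Set α)) : Prop :=
  (∀ A ∈ P, A.Nonempty) ∧
  (∀ A ∈ P, ∀ B ∈ P, A ≠ B → Disjoint A B) ∧
  ⋃₀ P = Set.univ

def IsCopartition {α : Type*} (P : Set (Set α)) : Prop :=
  IsPartition ((fun M => Mᶜ) '' P)

def SimpleGraph.restrictTo {V : Type*} (G : SimpleGraph V) (S : Set V) : SimpleGraph V where
  Adj x y := x ∈ S ∧ y ∈ S ∧ G.Adj x y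
  symm := by constructor; rintro x y ⟨hx, hy, h⟩; exact ⟨hy, hx, h.symm⟩
  loopless := by constructor; rintro x ⟨-, -, h⟩; exact (G.ne_of_adj h) rfl

def ConnectedWithin {V : Type*} (G : SimpleGraph V) (S : Set V) : Prop :=
  S.Nonempty ∧ ∀ x ∈ S, ∀ y ∈ S, (G.restrictTo S).Reachable x y

def IsCompWithin {V : Type*} (G : SimpleGraph V) (S : Set V) (C : Set V) : Prop :=
  ∃ x ∈ S, C = {y | (G.restrictTo S).Reachable x y}

def IsStrictTotalOrderOn {α : Type*} (S : Set α) (lt : α → α → Prop) : Prop :=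
  (∀ x ∈ S, ¬ lt x x) ∧
  (∀ x ∈ S, ∀ y ∈ S, ∀ z ∈ S, lt x y → lt y z → lt x z) ∧
  (∀ x ∈ S, ∀ y ∈ S, x ≠ y → (lt x y ∨ lt y x) ∧ ¬ (lt x y ∧ lt y x))

def CompatibleOn (D : Dissim X) (S : Set X) (lt : X → X → Prop) : Prop :=
  ∀ x ∈ S, ∀ y ∈ S, ∀ z ∈ S, lt x y → lt y z → D.d x y ≤ D.d x z ∧ D.d y z ≤ D.d x z

def IsCompatOrderOn (D : Dissim X) (S : Set X) (lt : X → X → Prop) : Prop :=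
  IsStrictTotalOrderOn S lt ∧ CompatibleOn D S lt

def FlatOn (D : Dissim X) (S : Set X) : Prop :=
  ∃ lt : X → X → Prop, IsCompatOrderOn D S lt ∧ (∃ x ∈ S, ∃ y ∈ S, lt x y) ∧
    ∀ lt' : X → X → Prop, IsCompatOrderOn D S lt' →
      (∀ x ∈ S, ∀ y ∈ S, (lt' x y ↔ lt x y)) ∨ (∀ x ∈ S, ∀ y ∈ S, (lt' x y ↔ lt y x))

def Flat (D : Dissim X) : Prop :=
  ∃ lt : X → X → Prop, IsCompatOrder D lt ∧ (∃ x y : X, lt x y) ∧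
    ∀ lt' : X → X → Prop, IsCompatOrder D lt' →
      (∀ x y : X, lt' x y ↔ lt x y) ∨ (∀ x y : X, lt' x y ↔ lt y x)

def IsCopointAt (D : Dissim X) (p : X) (C : Set X) : Prop :=
  IsMmodule D C ∧ C.Nonempty ∧ p ∉ C ∧
  ∀ C' : Set X, IsMmodule D C' → p ∉ C' → C ⊆ C' → C = C'

def bigGraph (D : Dissim X) (δ : ℝ) (I : Set (Set X)) : SimpleGraph (Set X) where
  Adj C C' := C ∈ I ∧ C' ∈ I ∧ C ≠ C' ∧ ∃ x ∈ C, ∃ y ∈ C', δ < D.d x y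
  symm := by
    constructor
    rintro C C' ⟨hC, hC', hne, x, hx, y, hy, hd⟩
    exact ⟨hC', hC, hne.symm, y, hy, x, hx, by rw [D.symm]; exact hd⟩
  loopless := by constructor; rintro C ⟨-, -, hne, -⟩; exact hne rfl

/-!
Let `<` and `<'` be compatible orders. Among the discordant pairs (`x < y` but `y <' x`) take one
with `x` minimal and then `y` maximal for `<`. Every point outside
`J = [x, y]_< ∪ [y, x]_<'` then lies beyond the same end of `J` in both orders, so by
compatibility its dissimilarity to `J` is constant: `J` is an mmodule with two points, hence
`J = X`. For the `<`-minimum `p` this shows that `p` is an end of `<'`: discordant pairs on both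
sides of `p` would each cover `X`, in incompatible ways. Once `p` is the first (or last) element
of `<'`, a covering `J` would have to contain `p`, which is impossible, so there is no
discordant pair at all and `<'` is `<` (or its reverse).
-/

open Function

def HasTrivialMmodules (D : Dissim X) : Prop :=
  ∀ M : Set X, IsMmodule D M → M = ∅ ∨ M = Set.univ ∨ ∃ x : X, M = {x}

def relIcc (lt : X → X → Prop) (a b : X) : Set X :=
  {u | (lt a u ∨ a = u) ∧ (lt u b ∨ u = b)}

def Discordant (lt lt' : X → X → Prop) (x y : X) : Prop :=
  lt x y ∧ lt' y x

section

variable {D : Dissim X} {lt lt' : X → X → Prop}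

theorem Compatible.swap (hc : Compatible D lt) : Compatible D (swap lt) := by
  intro x y z hxy hyz
  obtain ⟨hzy, hyx⟩ := hc z y x hyz hxy
  rw [D.symm x y, D.symm x z, D.symm y z]
  exact ⟨hyx, hzy⟩

theorem IsCompatOrder.swap (h : IsCompatOrder D lt) : IsCompatOrder D (swap lt) :=
  have := h.1
  ⟨inferInstance, h.2.swap⟩

theorem relIcc_swap (a b : X) : relIcc (swap lt) a b = relIcc lt b a := by
  ext u
  constructor <;> exact fun ⟨h₁, h₂⟩ => ⟨h₂.imp_right Eq.symm, h₁.imp_right Eq.symm⟩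

theorem left_mem_relIcc {a b : X} (h : lt a b) : a ∈ relIcc lt a b :=
  ⟨Or.inr rfl, Or.inl h⟩

theorem right_mem_relIcc {a b : X} (h : lt a b) : b ∈ relIcc lt a b :=
  ⟨Or.inl h, Or.inr rfl⟩

theorem HasTrivialMmodules.eq_univ (htriv : HasTrivialMmodules D) {M : Set X}
    (hM : IsMmodule D M) {x y : X} (hx : x ∈ M) (hy : y ∈ M) (hxy : x ≠ y) : M = Set.univ := by
  rcases htriv M hM with rfl | h | ⟨z, rfl⟩
  · exact absurd hx (Set.notMem_empty x)
  · exact h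
  · exact absurd ((Set.mem_singleton_iff.1 hx).trans (Set.mem_singleton_iff.1 hy).symm) hxy

theorem Compatible.dist_eq_of_mem_relIcc [IsTrans X lt] (hc : Compatible D lt) {w a b u : X}
    (hwa : lt w a) (hab : D.d w a = D.d w b) (hu : u ∈ relIcc lt a b) : D.d w u = D.d w a := by
  rcases hu with ⟨hau | rfl, hub | rfl⟩
  · exact le_antisymm ((hc w u b (trans_of lt hwa hau) hub).1.trans hab.ge) (hc w a u hwa hau).1
  · exact hab.symm
  · rfl
  · rfl

theorem dist_eq_of_mem_relIcc_union [IsTrans X lt] [IsTrans X lt'] (hc : Compatible D lt)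
    (hc' : Compatible D lt') {w x y u : X} (hxy : lt x y) (hyx : lt' y x) (hwx : lt w x)
    (hwy : lt' w y) (hu : u ∈ relIcc lt x y ∪ relIcc lt' y x) : D.d w u = D.d w x := by
  have hconst : D.d w x = D.d w y := le_antisymm (hc w x y hwx hxy).1 (hc' w y x hwy hyx).1
  rcases hu with hu | hu
  · exact hc.dist_eq_of_mem_relIcc hwx hconst hu
  · exact (hc'.dist_eq_of_mem_relIcc hwy hconst.symm hu).trans hconst.symm

theorem isMmodule_relIcc_union [IsTrans X lt] [IsTrans X lt'] (hc : Compatible D lt)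
    (hc' : Compatible D lt') {x y : X} (hxy : lt x y) (hyx : lt' y x)
    (hout : ∀ w ∉ relIcc lt x y ∪ relIcc lt' y x, (lt w x ∧ lt' w y) ∨ (lt y w ∧ lt' x w)) :
    IsMmodule D (relIcc lt x y ∪ relIcc lt' y x) := by
  intro w hw u hu v hv
  suffices key : ∀ u ∈ relIcc lt x y ∪ relIcc lt' y x, D.d w u = D.d w x from
    (key u hu).trans (key v hv).symm
  intro u hu
  rcases hout w hw with ⟨hwx, hwy⟩ | ⟨hyw, hxw⟩
  · exact dist_eq_of_mem_relIcc_union hc hc' hxy hyx hwx hwy hu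
  · have hu' : u ∈ relIcc (swap lt') x y ∪ relIcc (swap lt) y x := by
      rwa [relIcc_swap (lt := lt'), relIcc_swap (lt := lt), Set.union_comm]
    exact dist_eq_of_mem_relIcc_union hc'.swap hc.swap hyx hxy hxw hyw hu'

theorem Discordant.lt_or_lt_of_notMem_relIcc_union [IsStrictTotalOrder X lt]
    [IsStrictTotalOrder X lt'] {x y : X} (hxy : Discordant lt lt' x y)
    (hxmin : ∀ x' y', Discordant lt lt' x' y' → ¬ lt x' x)
    (hymax : ∀ y', Discordant lt lt' x y' → ¬ lt y y') {w : X}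
    (hw : w ∉ relIcc lt x y ∪ relIcc lt' y x) : (lt w x ∧ lt' w y) ∨ (lt y w ∧ lt' x w) := by
  have hwx : w ≠ x := (ne_of_mem_of_not_mem (Or.inl (left_mem_relIcc hxy.1)) hw).symm
  have hwy : w ≠ y := (ne_of_mem_of_not_mem (Or.inl (right_mem_relIcc hxy.1)) hw).symm
  rcases trichotomous_of lt w x with hwx' | rfl | hxw
  · refine Or.inl ⟨hwx', ?_⟩
    rcases trichotomous_of lt' w y with hwy' | rfl | hyw'
    · exact hwy'
    · exact absurd rfl hwy
    · exact absurd hwx' (hxmin w y ⟨trans_of lt hwx' hxy.1, hyw'⟩)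
  · exact absurd rfl hwx
  · have hyw : lt y w := by
      rcases trichotomous_of lt w y with hwy' | rfl | hyw
      · exact absurd (Or.inl ⟨Or.inl hxw, Or.inl hwy'⟩) hw
      · exact absurd rfl hwy
      · exact hyw
    refine Or.inr ⟨hyw, ?_⟩
    rcases trichotomous_of lt' x w with hxw' | rfl | hwx'
    · exact hxw'
    · exact absurd rfl hwx
    rcases trichotomous_of lt' w y with hwy' | rfl | hyw'
    · exact absurd hyw (hymax w ⟨hxw, hwx'⟩)
    · exact absurd rfl hwy
    · exact absurd (Or.inr ⟨Or.inl hyw', Or.inl hwx'⟩) hw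

theorem exists_extremal_discordant [Finite X] [IsStrictOrder X lt] {a b : X}
    (hab : Discordant lt lt' a b) :
    ∃ x y, Discordant lt lt' x y ∧ (∀ x' y', Discordant lt lt' x' y' → ¬ lt x' x) ∧
      (∀ y', Discordant lt lt' x y' → ¬ lt y y') := by
  obtain ⟨x, ⟨b', hxb'⟩, hxmin⟩ := (Finite.wellFounded_of_trans_of_irrefl lt).has_min
    {x | ∃ y, Discordant lt lt' x y} ⟨a, b, hab⟩
  obtain ⟨y, hxy, hymax⟩ := (Finite.wellFounded_of_trans_of_irrefl (swap lt)).has_min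
    {y | Discordant lt lt' x y} ⟨b', hxb'⟩
  exact ⟨x, y, hxy, fun x' y' h => hxmin x' ⟨y', h⟩, hymax⟩

theorem relIcc_union_eq_univ (htriv : HasTrivialMmodules D) (h : IsCompatOrder D lt)
    (h' : IsCompatOrder D lt') {x y : X} (hxy : Discordant lt lt' x y)
    (hxmin : ∀ x' y', Discordant lt lt' x' y' → ¬ lt x' x)
    (hymax : ∀ y', Discordant lt lt' x y' → ¬ lt y y') :
    relIcc lt x y ∪ relIcc lt' y x = Set.univ := by
  have := h.1
  have := h'.1
  have hM := isMmodule_relIcc_union h.2 h'.2 hxy.1 hxy.2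
    fun _ hw => hxy.lt_or_lt_of_notMem_relIcc_union hxmin hymax hw
  exact htriv.eq_univ hM (Or.inl (left_mem_relIcc hxy.1)) (Or.inl (right_mem_relIcc hxy.1))
    (ne_of_irrefl hxy.1)

theorem iff_of_forall_not_discordant [IsStrictTotalOrder X lt] [IsStrictTotalOrder X lt']
    (h : ∀ x y, ¬ Discordant lt lt' x y) (x y : X) : lt' x y ↔ lt x y := by
  constructor
  · intro hxy'
    rcases trichotomous_of lt x y with hxy | rfl | hyx
    · exact hxy
    · exact absurd hxy' (irrefl_of lt' x)
    · exact absurd ⟨hyx, hxy'⟩ (h y x)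
  · intro hxy
    rcases trichotomous_of lt' x y with hxy' | rfl | hyx'
    · exact hxy'
    · exact absurd hxy (irrefl_of lt x)
    · exact absurd ⟨hxy, hyx'⟩ (h x y)

theorem iff_of_forall_not_lt_of_forall_not_lt [Finite X] (htriv : HasTrivialMmodules D)
    (h : IsCompatOrder D lt) (h' : IsCompatOrder D lt') {p : X} (hp : ∀ x, ¬ lt x p)
    (hp' : ∀ x, ¬ lt' x p) (x y : X) : lt' x y ↔ lt x y := by
  have := h.1
  have := h'.1
  refine iff_of_forall_not_discordant (fun a b hab => ?_) x y
  obtain ⟨x₀, y₀, hxy, hxmin, hymax⟩ := exists_extremal_discordant hab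
  have hpJ : p ∈ relIcc lt x₀ y₀ ∪ relIcc lt' y₀ x₀ :=
    (relIcc_union_eq_univ htriv h h' hxy hxmin hymax).symm ▸ Set.mem_univ p
  rcases hpJ with ⟨hx₀p | rfl, -⟩ | ⟨hy₀p | rfl, -⟩
  · exact hp x₀ hx₀p
  · exact hp' y₀ hxy.2
  · exact hp' y₀ hy₀p
  · exact hp x₀ hxy.1

theorem exists_relIcc_union_eq_univ [Finite X] (htriv : HasTrivialMmodules D)
    (h : IsCompatOrder D lt) (h' : IsCompatOrder D lt') {p q : X} (hp : ∀ x, ¬ lt x p)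
    (hq : lt' q p) : ∃ y, lt' y p ∧ relIcc lt p y ∪ relIcc lt' y p = Set.univ := by
  have := h.1
  have := h'.1
  have hpq : lt p q := by
    rcases trichotomous_of lt p q with hpq | rfl | hqp
    · exact hpq
    · exact absurd hq (irrefl_of lt' p)
    · exact absurd hqp (hp q)
  obtain ⟨x₀, y, hxy, hxmin, hymax⟩ := exists_extremal_discordant (lt' := lt') ⟨hpq, hq⟩
  obtain rfl : x₀ = p := by
    rcases trichotomous_of lt x₀ p with hx₀p | hx₀p | hpx₀
    · exact absurd hx₀p (hp x₀)
    · exact hx₀p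
    · exact absurd hpx₀ (hxmin p q ⟨hpq, hq⟩)
  exact ⟨y, hxy.2, relIcc_union_eq_univ htriv h h' hxy hxmin hymax⟩

theorem forall_not_lt_or_forall_not_lt [Finite X] (htriv : HasTrivialMmodules D)
    (h : IsCompatOrder D lt) (h' : IsCompatOrder D lt') {p : X} (hp : ∀ x, ¬ lt x p) :
    (∀ x, ¬ lt' x p) ∨ (∀ x, ¬ lt' p x) := by
  have := h.1
  have := h'.1
  by_contra! ⟨⟨q, hq⟩, ⟨r, hr⟩⟩
  obtain ⟨y, hyp, hy⟩ := exists_relIcc_union_eq_univ htriv h h' hp hq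
  obtain ⟨y', hpy', hy'⟩ := exists_relIcc_union_eq_univ htriv h h'.swap hp hr
  rw [relIcc_swap (lt := lt')] at hy'
  -- `y <' p <' y'`, yet each of `y, y'` is `≤` the other for `<`
  have hyy' : lt y y' ∨ y = y' := by
    rcases hy'.symm ▸ Set.mem_univ y with ⟨-, hyy'⟩ | ⟨hpy | rfl, -⟩
    · exact hyy'
    · exact absurd hpy (asymm_of lt' hyp)
    · exact absurd hyp (irrefl_of lt' _)
  have hy'y : lt y' y ∨ y' = y := by
    rcases hy.symm ▸ Set.mem_univ y' with ⟨-, hy'y⟩ | ⟨-, hy'p | rfl⟩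
    · exact hy'y
    · exact absurd hy'p (asymm_of lt' hpy')
    · exact absurd hpy' (irrefl_of lt' _)
  rcases hyy' with hyy' | rfl
  · rcases hy'y with hy'y | rfl
    · exact asymm_of lt hyy' hy'y
    · exact irrefl_of lt y' hyy'
  · exact asymm_of lt' hyp hpy'

end

theorem stmt2_general [Fintype X] (D : Dissim X)
    (hcard : 3 ≤ Fintype.card X)
    (hRob : Robinson D)
    (htriv : ∀ M : Set X, IsMmodule D M → M = ∅ ∨ M = Set.univ ∨ ∃ x : X, M = {x}) :
    Flat D := by
  obtain ⟨lt, hlt⟩ := hRob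
  have := hlt.1
  have : Nontrivial X := Fintype.one_lt_card_iff_nontrivial.1 (by omega)
  obtain ⟨a, b, hab⟩ := exists_pair_ne X
  obtain ⟨p, -, hp⟩ :=
    (Finite.wellFounded_of_trans_of_irrefl lt).has_min Set.univ Set.univ_nonempty
  have hp : ∀ x, ¬ lt x p := fun x => hp x trivial
  refine ⟨lt, hlt, ?_, fun lt' hlt' => ?_⟩
  · rcases trichotomous_of lt a b with h | h | h
    exacts [⟨a, b, h⟩, absurd h hab, ⟨b, a, h⟩]
  rcases forall_not_lt_or_forall_not_lt htriv hlt hlt' hp with hmin | hmax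
  · exact Or.inl (iff_of_forall_not_lt_of_forall_not_lt htriv hlt hlt' hp hmin)
  · exact Or.inr fun x y =>
      iff_of_forall_not_lt_of_forall_not_lt htriv hlt hlt'.swap hp hmax y x

/-- a Robinson space with at least 3 points in which all mmodules are
trivial is flat. -/
theorem stmt2 [Fintype X] [Nonempty X] (D : Dissim X)
    (hcard : 3 ≤ Fintype.card X)
    (hRob : Robinson D)
    (htriv : ∀ M : Set X, IsMmodule D M → M = ∅ ∨ M = Set.univ ∨ ∃ x : X, M = {x}) :
    Flat D :=
  stmt2_general D hcard hRob htriv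
end

section
/- Let (X,d) be a dissimilarity space with |X| ≥ 2. Then M_max, the set of maximal mmodules of (X,d), is either a partition of X or a copartition of X. -/
variable {X : Type*}

/-!
Two overlapping mmodules have an mmodule as union, so two distinct overlapping maximal mmodules
cover `X`. Given one such pair `M₁, M₂`, no two maximal mmodules `M, M'` are disjoint: any maximal
`A ≠ M` meeting `M` would cover `X` with `M`, hence contain and equal `M'`, which misses `M`; but a
point of `M` lies in `M₁` or `M₂`, forcing both to equal `M`. So the complements are pairwise
disjoint, and they cover `X` because their union is itself an mmodule (for `z` in every maximal
mmodule, `d z` is constant on it). If no two maximal mmodules overlap, they are disjoint, and every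
singleton lies in one.
-/

namespace IsMmodule

theorem singleton (D : Dissim X) (x : X) : IsMmodule D {x} := by
  rintro z - a rfl b rfl
  rfl

variable {D : Dissim X}

theorem union {M M' : Set X} (hM : IsMmodule D M) (hM' : IsMmodule D M')
    (h : (M ∩ M').Nonempty) : IsMmodule D (M ∪ M') := by
  obtain ⟨w, hwM, hwM'⟩ := h
  have eq_w : ∀ z ∉ M ∪ M', ∀ a ∈ M ∪ M', D.d z a = D.d z w := by
    rintro z hz a (ha | ha)
    · exact hM z (fun h => hz (Or.inl h)) a ha w hwM
    · exact hM' z (fun h => hz (Or.inr h)) a ha w hwM'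
  intro z hz a ha b hb
  rw [eq_w z hz a ha, eq_w z hz b hb]

theorem dist_eq_of_union_eq_univ {A B : Set X} (hA : IsMmodule D A) (hB : IsMmodule D B)
    (hAB : A ∪ B = Set.univ) {z a b : X} (hzA : z ∈ A) (hzB : z ∈ B) (ha : a ∉ A)
    (hb : b ∉ B) : D.d z a = D.d z b := by
  have haB : a ∈ B := (hAB ▸ Set.mem_univ a : a ∈ A ∪ B).resolve_left ha
  have hbA : b ∈ A := (hAB ▸ Set.mem_univ b : b ∈ A ∪ B).resolve_right hb
  calc D.d z a = D.d a z := D.symm z a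
    _ = D.d a b := hA a ha z hzA b hbA
    _ = D.d b a := D.symm a b
    _ = D.d b z := (hB b hb z hzB a haB).symm
    _ = D.d z b := D.symm b z

end IsMmodule

theorem exists_mem_MMax_superset [Finite X] {D : Dissim X} {M : Set X} (hM : IsMmodule D M)
    (hne : M ≠ Set.univ) : ∃ N ∈ MMax D, M ⊆ N := by
  obtain ⟨N, hMN, hN⟩ :=
    Finite.exists_le_maximal (p := fun N : Set X => IsMmodule D N ∧ N ≠ Set.univ) ⟨hM, hne⟩
  exact ⟨N, ⟨hN.prop.1, hN.prop.2, fun N' hN' hne' h => hN.eq_of_le ⟨hN', hne'⟩ h⟩, hMN⟩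

theorem exists_mem_MMax_mem [Finite X] [Nontrivial X] (D : Dissim X) (x : X) :
    ∃ M ∈ MMax D, x ∈ M := by
  obtain ⟨M, hM, hxM⟩ :=
    exists_mem_MMax_superset (IsMmodule.singleton D x) (Set.singleton_ne_univ x)
  exact ⟨M, hM, hxM rfl⟩

namespace MMax

variable {D : Dissim X} {M M' A : Set X}

theorem nonempty (hA : A ∈ MMax D) (hAne : A.Nonempty) (hM : M ∈ MMax D) : M.Nonempty := by
  rw [Set.nonempty_iff_ne_empty]
  rintro rfl
  rw [← hM.2.2 A hA.1 hA.2.1 (Set.empty_subset A)] at hAne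
  exact hAne.ne_empty rfl

theorem union_eq_univ (hM : M ∈ MMax D) (hM' : M' ∈ MMax D) (hne : M ≠ M')
    (hov : (M ∩ M').Nonempty) : M ∪ M' = Set.univ := by
  by_contra h
  have hM_eq := hM.2.2 _ (hM.1.union hM'.1 hov) h Set.subset_union_left
  exact hne (hM'.2.2 M hM.1 hM.2.1 (hM_eq ▸ Set.subset_union_right)).symm

theorem eq_of_inter_nonempty_of_disjoint (hM : M ∈ MMax D) (hM' : M' ∈ MMax D)
    (hdisj : Disjoint M M') (hA : A ∈ MMax D) (hAM : (A ∩ M).Nonempty) : A = M := by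
  by_contra hne
  have hM'A : M' ⊆ A := fun y hy =>
    ((union_eq_univ hA hM hne hAM ▸ Set.mem_univ y : y ∈ A ∪ M).resolve_right
      (hdisj.notMem_of_mem_right hy))
  rw [← hM'.2.2 A hA.1 hA.2.1 hM'A, Set.inter_comm] at hAM
  exact hAM.not_disjoint hdisj

theorem not_disjoint_of_overlap {M₁ M₂ : Set X} (h₁ : M₁ ∈ MMax D) (h₂ : M₂ ∈ MMax D)
    (h₁₂ : M₁ ≠ M₂) (hov : (M₁ ∩ M₂).Nonempty) (hM : M ∈ MMax D) (hM' : M' ∈ MMax D) :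
    ¬ Disjoint M M' := by
  intro hdisj
  have eq_M := fun {A} hA hAM => eq_of_inter_nonempty_of_disjoint (A := A) hM hM' hdisj hA hAM
  obtain ⟨w, hw₁, hw₂⟩ := hov
  obtain ⟨x, hx⟩ := nonempty h₁ ⟨w, hw₁⟩ hM
  have hx₁₂ : x ∈ M₁ ∪ M₂ := union_eq_univ h₁ h₂ h₁₂ ⟨w, hw₁, hw₂⟩ ▸ Set.mem_univ x
  rcases hx₁₂ with hx₁ | hx₂
  · have e₁ := eq_M h₁ ⟨x, hx₁, hx⟩
    exact h₁₂ (e₁.trans (eq_M h₂ ⟨w, hw₂, e₁ ▸ hw₁⟩).symm)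
  · have e₂ := eq_M h₂ ⟨x, hx₂, hx⟩
    exact h₁₂ ((eq_M h₁ ⟨w, hw₁, e₂ ▸ hw₂⟩).trans e₂.symm)

theorem isMmodule_setOf_exists_notMem {M₁ M₂ : Set X} (h₁ : M₁ ∈ MMax D) (h₂ : M₂ ∈ MMax D)
    (h₁₂ : M₁ ≠ M₂) (hcover : ∀ M ∈ MMax D, ∀ M' ∈ MMax D, M ≠ M' → M ∪ M' = Set.univ) :
    IsMmodule D {y | ∃ M ∈ MMax D, y ∉ M} := by
  rintro z hz a ⟨Ma, hMa, ha⟩ b ⟨Mb, hMb, hb⟩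
  replace hz : ∀ M ∈ MMax D, z ∈ M := fun M hM => by_contra fun h => hz ⟨M, hM, h⟩
  have dist_eq : ∀ {A B u v}, A ∈ MMax D → B ∈ MMax D → A ≠ B → u ∉ A → v ∉ B →
      D.d z u = D.d z v := fun hA hB hAB hu hv =>
    hA.1.dist_eq_of_union_eq_univ hB.1 (hcover _ hA _ hB hAB) (hz _ hA) (hz _ hB) hu hv
  by_cases hab : Ma = Mb
  · obtain ⟨Mc, hMc, hca⟩ : ∃ Mc ∈ MMax D, Mc ≠ Ma := by
      by_cases h : M₁ = Ma
      · exact ⟨M₂, h₂, fun he => h₁₂ (h.trans he.symm)⟩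
      · exact ⟨M₁, h₁, h⟩
    obtain ⟨c, hc⟩ := Set.nonempty_compl.mpr hMc.2.1
    subst hab
    exact (dist_eq hMa hMc hca.symm ha hc).trans (dist_eq hMc hMa hca hc hb)
  · exact dist_eq hMa hMb hab ha hb

theorem exists_notMem [Finite X] {M₁ M₂ : Set X} (h₁ : M₁ ∈ MMax D) (h₂ : M₂ ∈ MMax D)
    (h₁₂ : M₁ ≠ M₂) (hcover : ∀ M ∈ MMax D, ∀ M' ∈ MMax D, M ≠ M' → M ∪ M' = Set.univ)
    (x : X) : ∃ M ∈ MMax D, x ∉ M := by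
  by_contra! hx
  have hN_ne : {y | ∃ M ∈ MMax D, y ∉ M} ≠ Set.univ := fun h =>
    let ⟨M, hM, hxM⟩ := (h ▸ Set.mem_univ x : x ∈ {y | ∃ M ∈ MMax D, y ∉ M})
    hxM (hx M hM)
  obtain ⟨M, hM, hNM⟩ :=
    exists_mem_MMax_superset (isMmodule_setOf_exists_notMem h₁ h₂ h₁₂ hcover) hN_ne
  obtain ⟨y, hy⟩ := Set.nonempty_compl.mpr hM.2.1
  exact hy (hNM ⟨M, hM, hy⟩)

end MMax

theorem isCopartition_MMax_of_overlap [Finite X] {D : Dissim X} {M₁ M₂ : Set X}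
    (h₁ : M₁ ∈ MMax D) (h₂ : M₂ ∈ MMax D) (h₁₂ : M₁ ≠ M₂) (hov : (M₁ ∩ M₂).Nonempty) :
    IsCopartition (MMax D) := by
  have hcover : ∀ M ∈ MMax D, ∀ M' ∈ MMax D, M ≠ M' → M ∪ M' = Set.univ :=
    fun M hM M' hM' hne => MMax.union_eq_univ hM hM' hne
      (Set.not_disjoint_iff_nonempty_inter.mp (MMax.not_disjoint_of_overlap h₁ h₂ h₁₂ hov hM hM'))
  refine ⟨?_, ?_, ?_⟩
  · rintro - ⟨M, hM, rfl⟩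
    exact Set.nonempty_compl.mpr hM.2.1
  · rintro - ⟨M, hM, rfl⟩ - ⟨M', hM', rfl⟩ hne
    rw [Set.disjoint_iff_inter_eq_empty, ← Set.compl_union,
      hcover M hM M' hM' (fun h => hne (h ▸ rfl)), Set.compl_univ]
  · refine Set.eq_univ_of_forall fun x => ?_
    obtain ⟨M, hM, hxM⟩ := MMax.exists_notMem h₁ h₂ h₁₂ hcover x
    exact ⟨Mᶜ, ⟨M, hM, rfl⟩, hxM⟩

theorem isPartition_MMax_of_pairwiseDisjoint [Finite X] [Nontrivial X] {D : Dissim X}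
    (hdisj : (MMax D).PairwiseDisjoint id) : IsPartition (MMax D) := by
  refine ⟨fun M hM => ?_, fun A hA B hB hAB => hdisj hA hB hAB, ?_⟩
  · obtain ⟨A, hA, hxA⟩ := exists_mem_MMax_mem D (Classical.arbitrary X)
    exact MMax.nonempty hA ⟨_, hxA⟩ hM
  · refine Set.eq_univ_of_forall fun x => ?_
    obtain ⟨M, hM, hxM⟩ := exists_mem_MMax_mem D x
    exact ⟨M, hM, hxM⟩

theorem stmt19_general [Fintype X] (D : Dissim X)
    (hcard : 2 ≤ Fintype.card X) :
    IsPartition (MMax D) ∨ IsCopartition (MMax D) := by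
  by_cases hov : ∃ M₁ ∈ MMax D, ∃ M₂ ∈ MMax D, M₁ ≠ M₂ ∧ (M₁ ∩ M₂).Nonempty
  · obtain ⟨M₁, h₁, M₂, h₂, h₁₂, hM₁₂⟩ := hov
    exact Or.inr (isCopartition_MMax_of_overlap h₁ h₂ h₁₂ hM₁₂)
  · have : Nontrivial X := Fintype.one_lt_card_iff_nontrivial.mp hcard
    refine Or.inl (isPartition_MMax_of_pairwiseDisjoint fun A hA B hB hAB => ?_)
    by_contra h
    exact hov ⟨A, hA, B, hB, hAB, Set.not_disjoint_iff_nonempty_inter.mp h⟩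

/-- M_max is either a partition or a copartition of X. -/
theorem stmt19 [Fintype X] [Nonempty X] (D : Dissim X)
    (hcard : 2 ≤ Fintype.card X) :
    IsPartition (MMax D) ∨ IsCopartition (MMax D) :=
  stmt19_general D hcard
end
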